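/- arXiv:1710.03180 — 3 statements merged into one kernel-verified Lean document; each statement's English description precedes it below -/
import Mathlib

section
/- Let q = sl_n ⋉ (n copies of k^n) where the abelian ideal n·k^n is identified with n×n matrices on which sl_n acts by left multiplication. Then the determinant polynomial on (n·k^n)* ≅ M_n(k), pulled back to q*, is invariant under the coadjoint action of q. -/
open Module Matrix

variable (k : Type*) [Field k] (n : ℕ)

/-- The underlying space of the Lie algebra `q = sl_n ⋉ (n copies of k^n)`, the
abelian ideal being identified with `n×n` matrices on which `sl_n` acts by left
multiplication. -/
abbrev slSemidirect := ↥(LieAlgebra.SpecialLinear.sl (Fin n) k) × Matrix (Fin n) (Fin n) k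

/-- The inverse adjoint action `Ad((g,v)⁻¹)` of an element `(g,v)` of the group
`Q = SL_n ⋉ M_n` on its Lie algebra `q = sl_n ⋉ M_n`:
`(B,Y) ↦ (g⁻¹Bg, g⁻¹Y + g⁻¹Bg·g⁻¹v)`. -/
noncomputable def adInv (g : Matrix.SpecialLinearGroup (Fin n) k)
    (v : Matrix (Fin n) (Fin n) k) : slSemidirect k n →ₗ[k] slSemidirect k n where
  toFun p :=
    (⟨(↑(g⁻¹) : Matrix (Fin n) (Fin n) k) * (p.1 : Matrix (Fin n) (Fin n) k) *
        (↑g : Matrix (Fin n) (Fin n) k), by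
        show _ ∈ LinearMap.ker (Matrix.traceLinearMap (Fin n) k k)
        rw [LinearMap.mem_ker, Matrix.traceLinearMap_apply, Matrix.trace_mul_cycle]
        rw [show ((↑g : Matrix (Fin n) (Fin n) k) * ↑(g⁻¹)) = 1 by
          rw [← Matrix.SpecialLinearGroup.coe_mul, mul_inv_cancel,
            Matrix.SpecialLinearGroup.coe_one]]
        rw [one_mul]
        exact p.1.2⟩,
      (↑(g⁻¹) : Matrix (Fin n) (Fin n) k) * p.2 +
        (↑(g⁻¹) : Matrix (Fin n) (Fin n) k) * (p.1 : Matrix (Fin n) (Fin n) k) * ↑g *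
          ((↑(g⁻¹) : Matrix (Fin n) (Fin n) k) * v))
  map_add' p q := by
    refine Prod.ext (Subtype.ext ?_) ?_ <;>
      simp [Matrix.mul_add, Matrix.add_mul] <;> abel
  map_smul' c p := by
    have hcoe : ∀ x : ↥(LieAlgebra.SpecialLinear.sl (Fin n) k),
        (↑(c • x) : Matrix (Fin n) (Fin n) k) = c • (↑x : Matrix (Fin n) (Fin n) k) :=
      fun _ => rfl
    refine Prod.ext (Subtype.ext ?_) ?_ <;>
      simp [hcoe, Matrix.mul_smul, Matrix.smul_mul, smul_add,
        smul_mul_assoc, mul_smul_comm]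

/-- The determinant on `(n·k^n)* ≅ M_n(k)`, pulled back to `q*`:
the dual of the abelian part is identified with matrices `η` via the trace pairing
`ξ(Y) = tr(ηY)`, i.e. `η_{ij} = ξ(E_{ji})`. -/
noncomputable def detOnDual (ξ : Module.Dual k (slSemidirect k n)) : k :=
  Matrix.det (Matrix.of fun i j : Fin n => ξ (0, Matrix.single j i 1))

/-! The coadjoint action of `(g, v)` moves the dual variable `η` of the abelian ideal to `η g⁻¹`,
since `Ad((g,v)⁻¹)` acts on the ideal by left multiplication by `g⁻¹` and `η` pairs with it
through `ξ(Y) = tr(ηY)`; as `det g⁻¹ = 1`, the determinant of `η` is unchanged. -/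

section
variable {m R : Type*} [Fintype m] [DecidableEq m] [CommSemiring R]

theorem Matrix.mul_single_one_eq_sum (M : Matrix m m R) (i j : m) :
    M * single i j 1 = ∑ a, M a i • single a j 1 := by
  ext a b
  by_cases hb : b = j
  · subst hb
    simp [sum_apply, single_apply]
  · simp [sum_apply, mul_single_apply_of_ne (hbj := hb), Ne.symm hb]

theorem Matrix.of_map_mul_single_one (φ : Matrix m m R →ₗ[R] R) (M : Matrix m m R) :
    of (fun i j => φ (M * single j i 1)) = of (fun i j => φ (single j i 1)) * M := by
  ext i j
  simp only [of_apply, mul_single_one_eq_sum, map_sum, map_smul, smul_eq_mul, mul_apply, mul_comm]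

end

theorem adInv_inr (g : Matrix.SpecialLinearGroup (Fin n) k) (v Y : Matrix (Fin n) (Fin n) k) :
    adInv k n g v (0, Y) = (0, (↑(g⁻¹) : Matrix (Fin n) (Fin n) k) * Y) := by
  ext <;> simp [adInv]

theorem detOnDual_eq_det_inr (ξ : Module.Dual k (slSemidirect k n)) :
    detOnDual k n ξ =
      det (of fun i j : Fin n => (ξ ∘ₗ LinearMap.inr k _ _) (single j i 1)) :=
  rfl

theorem det_is_coadjoint_invariant
    (g : Matrix.SpecialLinearGroup (Fin n) k) (v : Matrix (Fin n) (Fin n) k)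
    (ξ : Module.Dual k (slSemidirect k n)) :
    detOnDual k n (ξ ∘ₗ adInv k n g v) = detOnDual k n ξ := by
  set φ := ξ ∘ₗ LinearMap.inr k _ (Matrix (Fin n) (Fin n) k)
  calc detOnDual k n (ξ ∘ₗ adInv k n g v)
      = det (of fun i j => φ ((↑(g⁻¹) : Matrix (Fin n) (Fin n) k) * single j i 1)) := by
        simp [detOnDual, adInv_inr, φ]
    _ = det (of (fun i j => φ (single j i 1)) * ↑(g⁻¹)) := by
        rw [of_map_mul_single_one]
    _ = detOnDual k n ξ := by
        rw [det_mul, (g⁻¹).prop, mul_one, detOnDual_eq_det_inr]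
end

section
/- In the setting of Raïs–Tauvel polarization, each coefficient F^j(ξ) has the form F^j(ξ) = ⟨(df)_{ξ_m}, ξ_{m-j}⟩ + H_j(ξ_m, …, ξ_{m-j+1}) for some polynomial H_j depending only on the components ξ_m, …, ξ_{m-j+1}. -/
open Module MvPolynomial

variable (k : Type*) [Field k]

/-- Coordinates of `ξ ∈ q*` w.r.t. a basis of `q`. -/
noncomputable def coords {L ι : Type*} [AddCommGroup L] [Module k L]
    (b : Basis ι k L) (ξ : Module.Dual k L) : ι → k := fun i => ξ (b i)

/-- The Raïs–Tauvel polarization coefficients of `f`: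
`f(ξ_m + ε ξ_{m-1} + ⋯ + ε^m ξ_0) = Σ_j F^j(ξ) ε^j`. -/
noncomputable def polarization {L ι : Type*} [AddCommGroup L] [Module k L]
    (b : Basis ι k L) (m : ℕ) (f : MvPolynomial ι k) (j : ℕ)
    (ξ : Fin (m + 1) → Module.Dual k L) : k :=
  Polynomial.coeff
    (MvPolynomial.aeval
      (fun i : ι => ∑ r : Fin (m + 1),
        Polynomial.C (ξ r (b i)) * Polynomial.X ^ (m - (r : ℕ))) f) j

/-!
Write the substitution `X_i ↦ Σ_r ξ_r(b_i) ε^{m-r}` as `Q_i + δ_i`, where `Q_i` collects the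
terms with `m - r < j` and `δ_i` those with `m - r ≥ j`. Every `δ_i` is divisible by `ε^j`, so the
first-order Taylor formula `f(Q + δ) ≡ f(Q) + Σ_i ∂_i f(Q) δ_i (mod ε^{2j})` holds, and for `j ≥ 1`
it may be read at `ε^j`: the first term only involves `ξ_r` with `r > m - j`, and the second
contributes `Σ_i ∂_i f(Q)(0) · [ε^j] δ_i = Σ_i ∂_i f(ξ_m) ξ_{m-j}(b_i)`. For `j = 0` the
coefficient is `f(ξ_m)` itself. The computation is carried out with generic coordinates
`X_{(r,i)}` in place of `ξ_r(b_i)` and evaluated at the end.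
-/

namespace Polynomial

variable {R : Type*} [CommSemiring R]

theorem coeff_mul_of_X_pow_dvd {n : ℕ} (p : R[X]) {q : R[X]} (hq : X ^ n ∣ q) :
    (p * q).coeff n = p.coeff 0 * q.coeff n := by
  obtain ⟨q, rfl⟩ := hq
  rw [mul_left_comm, coeff_X_pow_mul', coeff_X_pow_mul', if_pos le_rfl, if_pos le_rfl,
    Nat.sub_self, mul_coeff_zero]

theorem coeff_eq_zero_of_mem_span_X_pow {n d : ℕ} {p : R[X]}
    (hp : p ∈ Ideal.span {X ^ n}) (hd : d < n) : p.coeff d = 0 :=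
  X_pow_dvd_iff.mp (Ideal.mem_span_singleton.mp hp) d hd

end Polynomial

namespace MvPolynomial

variable {R σ : Type*} [CommSemiring R]

theorem rename_mem_supported {τ : Type*} {g : σ → τ} {s : Set τ} (hg : ∀ i, g i ∈ s)
    (p : MvPolynomial σ R) : rename g p ∈ supported R s := by
  classical
  rw [mem_supported]
  refine (Finset.coe_subset.2 (vars_rename g p)).trans ?_
  simpa [Set.subset_def] using fun i _ => hg i

theorem aeval_add_sub_sub_sum_pderiv_mem_sq {B : Type*} [CommRing B] [Algebra R B] [Fintype σ]
    (I : Ideal B) (x : σ → B) {δ : σ → B} (hδ : ∀ i, δ i ∈ I) (f : MvPolynomial σ R) :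
    aeval (x + δ) f - aeval x f - ∑ i, aeval x (pderiv i f) * δ i ∈ I ^ 2 := by
  classical
  induction f using MvPolynomial.induction_on with
  | C a => simp
  | add p q hp hq =>
    convert add_mem hp hq using 1
    simp only [map_add, add_mul, Finset.sum_add_distrib]
    ring
  | mul_X p i hp =>
    have hleibniz : ∑ l, aeval x (pderiv l (p * X i)) * δ l =
        (∑ l, aeval x (pderiv l p) * δ l) * x i + aeval x p * δ i := by
      simp only [Derivation.leibniz, pderiv_X, smul_eq_mul, map_add, map_mul, aeval_X,
        Pi.single_apply, add_mul, Finset.sum_add_distrib, Finset.sum_mul]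
      rw [add_comm]
      congr 1
      · exact Finset.sum_congr rfl fun l _ => by ring
      · simp [apply_ite (aeval x), ite_mul]
    have hsq : (∑ l, aeval x (pderiv l p) * δ l) * δ i ∈ I ^ 2 :=
      pow_two I ▸ Ideal.mul_mem_mul (Ideal.sum_mem _ fun l _ => I.mul_mem_left _ (hδ l)) (hδ i)
    convert add_mem ((I ^ 2).mul_mem_right (x i + δ i) hp) hsq using 1
    rw [hleibniz]
    simp only [map_mul, aeval_X, Pi.add_apply]
    ring

variable {A : Type*} [CommSemiring A] [Algebra R A]

theorem coeff_zero_aeval (x : σ → Polynomial A) (f : MvPolynomial σ R) :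
    (aeval x f).coeff 0 = aeval (fun i => (x i).coeff 0) f := by
  simp only [Polynomial.coeff_zero_eq_aeval_zero]
  exact comp_aeval_apply x ((Polynomial.aeval (0 : A)).restrictScalars R) f

theorem coeff_aeval_mem (S : Subalgebra R A) {x : σ → Polynomial A}
    (hx : ∀ i n, (x i).coeff n ∈ S) (f : MvPolynomial σ R) (n : ℕ) :
    (aeval x f).coeff n ∈ S := by
  induction f using MvPolynomial.induction_on generalizing n with
  | C a =>
    rw [aeval_C, Polynomial.algebraMap_apply, Polynomial.coeff_C]
    split_ifs
    exacts [S.algebraMap_mem a, S.zero_mem]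
  | add p q hp hq => simpa only [map_add, Polynomial.coeff_add] using S.add_mem (hp n) (hq n)
  | mul_X p i hp =>
    rw [map_mul, aeval_X, Polynomial.coeff_mul]
    exact S.sum_mem fun c _ => S.mul_mem (hp c.1) (hx i c.2)

end MvPolynomial

section PolarizationSubst

/-- `X_i ↦ Σ_{r ∈ s} X_{(r,i)} ε^{m-r}`; for `s = univ` and `X_{(r,i)} ↦ ξ_r(b_i)` this is the
substitution defining `polarization`. -/
noncomputable def polarizationSubst {ι : Type*} (m : ℕ) (s : Finset (Fin (m + 1))) (i : ι) :
    Polynomial (MvPolynomial (Fin (m + 1) × ι) k) :=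
  ∑ r ∈ s, Polynomial.C (X (r, i)) * Polynomial.X ^ (m - (r : ℕ))

variable {k} {ι : Type*} {m : ℕ}

theorem coeff_polarizationSubst (s : Finset (Fin (m + 1))) (i : ι) {c : ℕ} (hc : c ≤ m) :
    (polarizationSubst k m s i).coeff c =
      if (⟨m - c, by omega⟩ : Fin (m + 1)) ∈ s then X (⟨m - c, by omega⟩, i) else 0 := by
  have hdeg : ∀ r : Fin (m + 1), c = m - r ↔ (⟨m - c, by omega⟩ : Fin (m + 1)) = r := fun r => by
    rw [Fin.ext_iff]; have := r.isLt; dsimp only; omega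
  simp only [polarizationSubst, Polynomial.finsetSum_coeff, Polynomial.coeff_C_mul_X_pow, hdeg]
  exact Finset.sum_ite_eq s _ _

theorem coeff_polarizationSubst_mem_supported {s : Finset (Fin (m + 1))}
    {T : Set (Fin (m + 1) × ι)} {i : ι} (hs : ∀ r ∈ s, (r, i) ∈ T) (n : ℕ) :
    (polarizationSubst k m s i).coeff n ∈ supported k T := by
  simp only [polarizationSubst, Polynomial.finsetSum_coeff, Polynomial.coeff_C_mul_X_pow]
  refine Subalgebra.sum_mem _ fun r hr => ?_
  split_ifs
  exacts [X_mem_supported.2 (hs r hr), Subalgebra.zero_mem _]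

theorem polarizationSubst_filter_add_filter_not (s : Finset (Fin (m + 1)))
    (p : Fin (m + 1) → Prop) [DecidablePred p] :
    polarizationSubst k m (s.filter p) + polarizationSubst k m (s.filter (¬ p ·)) =
      polarizationSubst (ι := ι) k m s := by
  ext1 i
  exact Finset.sum_filter_add_sum_filter_not s p _

theorem polarizationSubst_mem_span_X_pow {s : Finset (Fin (m + 1))} {j : ℕ}
    (hs : ∀ r ∈ s, j ≤ m - r) (i : ι) :
    polarizationSubst k m s i ∈ Ideal.span {Polynomial.X ^ j} :=
  Ideal.sum_mem _ fun r hr => Ideal.mem_span_singleton.2 <|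
    dvd_mul_of_dvd_right (pow_dvd_pow _ (hs r hr)) _

theorem coeff_zero_aeval_polarizationSubst {s : Finset (Fin (m + 1))} (hs : Fin.last m ∈ s)
    (f : MvPolynomial ι k) :
    (aeval (polarizationSubst k m s) f).coeff 0 = rename (Prod.mk (Fin.last m)) f := by
  rw [coeff_zero_aeval, rename_eq_aeval]
  refine congrArg (aeval · f) (funext fun i => ?_)
  rw [coeff_polarizationSubst s i (Nat.zero_le m)]
  exact if_pos hs

theorem coeff_aeval_polarizationSubst [Fintype ι] (f : MvPolynomial ι k) {j : ℕ} (hj : 0 < j)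
    (hjm : j ≤ m) :
    (aeval (polarizationSubst k m Finset.univ) f).coeff j =
      ∑ i, rename (Prod.mk (Fin.last m)) (pderiv i f) * X (⟨m - j, by omega⟩, i) +
        (aeval (polarizationSubst k m (Finset.univ.filter fun r => m - r < j)) f).coeff j := by
  have hhigh : ∀ i : ι, polarizationSubst k m (Finset.univ.filter fun r => ¬ m - r < j) i ∈
      Ideal.span {Polynomial.X ^ j} :=
    polarizationSubst_mem_span_X_pow fun r hr => by simpa using hr
  have htaylor := aeval_add_sub_sub_sum_pderiv_mem_sq _
    (polarizationSubst k m (Finset.univ.filter fun r => m - r < j)) hhigh f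
  rw [polarizationSubst_filter_add_filter_not, Ideal.span_singleton_pow, ← pow_mul] at htaylor
  have hcoeff := Polynomial.coeff_eq_zero_of_mem_span_X_pow htaylor (by omega : j < j * 2)
  rw [Polynomial.coeff_sub, Polynomial.coeff_sub, sub_sub, sub_eq_zero] at hcoeff
  refine hcoeff.trans ((add_comm _ _).trans (congrArg (· + _) ?_))
  rw [Polynomial.finsetSum_coeff]
  refine Finset.sum_congr rfl fun i _ => ?_
  rw [Polynomial.coeff_mul_of_X_pow_dvd _ (Ideal.mem_span_singleton.mp (hhigh i)),
    coeff_zero_aeval_polarizationSubst (by simp; omega), coeff_polarizationSubst _ _ hjm,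
    if_pos (by simp; omega)]

theorem exists_coeff_aeval_polarizationSubst_eq [Fintype ι] (f : MvPolynomial ι k) {j : ℕ}
    (hj : j ≤ m) :
    ∃ H ∈ supported k {v : Fin (m + 1) × ι | m - j + 1 ≤ (v.1 : ℕ) ∨ (v.1 : ℕ) = m},
      (aeval (polarizationSubst k m Finset.univ) f).coeff j =
        ∑ i, rename (Prod.mk (Fin.last m)) (pderiv i f) * X (⟨m - j, by omega⟩, i) + H := by
  rcases Nat.eq_zero_or_pos j with rfl | hj0
  · have hlast : ∀ i : ι,
        (Fin.last m, i) ∈ {v : Fin (m + 1) × ι | m - 0 + 1 ≤ (v.1 : ℕ) ∨ (v.1 : ℕ) = m} :=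
      fun i => Or.inr (Fin.val_last m)
    refine ⟨rename (Prod.mk (Fin.last m)) f -
      ∑ i, rename (Prod.mk (Fin.last m)) (pderiv i f) * X (Fin.last m, i), ?_, ?_⟩
    · exact sub_mem (rename_mem_supported hlast f) (Subalgebra.sum_mem _ fun i _ =>
        Subalgebra.mul_mem _ (rename_mem_supported hlast _) (X_mem_supported.2 (hlast i)))
    · rw [coeff_zero_aeval_polarizationSubst (Finset.mem_univ _)]
      exact (add_sub_cancel _ _).symm
  · have hlow : ∀ (i : ι), ∀ r ∈ Finset.univ.filter fun r : Fin (m + 1) => m - r < j,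
        (r, i) ∈ {v : Fin (m + 1) × ι | m - j < (v.1 : ℕ)} := fun i r hr => by
      simp only [Finset.mem_filter, Finset.mem_univ, true_and] at hr
      show m - j < (r : ℕ)
      omega
    refine ⟨_, supported_mono ?_ (coeff_aeval_mem _
      (fun i n => coeff_polarizationSubst_mem_supported (hlow i) n) f j),
      coeff_aeval_polarizationSubst f hj0 hj⟩
    exact fun v hv => Or.inl (Nat.succ_le_of_lt hv)

theorem polarization_eq_eval_coeff {L : Type*} [AddCommGroup L] [Module k L] (b : Basis ι k L)
    (f : MvPolynomial ι k) (j : ℕ) (ξ : Fin (m + 1) → Module.Dual k L) :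
    polarization k b m f j ξ = eval (fun v : Fin (m + 1) × ι => ξ v.1 (b v.2))
      ((aeval (polarizationSubst k m Finset.univ) f).coeff j) := by
  set φ := aeval (R := k) fun v : Fin (m + 1) × ι => ξ v.1 (b v.2)
  have hsubst : (fun i => ∑ r : Fin (m + 1), Polynomial.C (ξ r (b i)) * Polynomial.X ^ (m - r)) =
      fun i => Polynomial.mapAlgHom φ (polarizationSubst k m Finset.univ i) := by
    funext i
    simp [φ, polarizationSubst]
  rw [polarization, hsubst, ← comp_aeval_apply, Polynomial.coe_mapAlgHom, Polynomial.coeff_map]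
  rfl

end PolarizationSubst

/-- Each polarization coefficient has the form
`F^j(ξ) = ⟨(df)_{ξ_m}, ξ_{m-j}⟩ + H_j(ξ_m,…,ξ_{m-j+1})` for some polynomial `H_j`
depending only on the components `ξ_m, …, ξ_{m-j+1}`. -/
theorem polarization_triangular_form {L ι : Type*} [LieRing L] [LieAlgebra k L]
    [Fintype ι] (b : Basis ι k L) (m : ℕ) (f : MvPolynomial ι k) :
    ∀ j : ℕ, j ≤ m →
      ∃ H : MvPolynomial (Fin (m + 1) × ι) k,
        (∀ v ∈ H.vars, m - j + 1 ≤ (v.1 : ℕ) ∨ (v.1 : ℕ) = m) ∧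
        ∀ ξ : Fin (m + 1) → Module.Dual k L,
          polarization k b m f j ξ =
            (∑ i, MvPolynomial.eval (coords k b (ξ (Fin.last m)))
                (MvPolynomial.pderiv i f) * ξ (⟨m - j, by omega⟩ : Fin (m + 1)) (b i)) +
              MvPolynomial.eval (fun v : Fin (m + 1) × ι => ξ v.1 (b v.2)) H := by
  intro j hj
  obtain ⟨H, hH, hcoeff⟩ := exists_coeff_aeval_polarizationSubst_eq f hj
  refine ⟨H, fun v hv => mem_supported.1 hH hv, fun ξ => ?_⟩
  rw [polarization_eq_eval_coeff, hcoeff, map_add, map_sum]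
  simp only [map_mul, eval_rename, eval_X]
  rfl
end

section
/- Suppose k[q*]^Q = k[f₁,…,f_l] with l = ind q and Ω_{q*} big. For ξ = (ξ_0,…,ξ_m) ∈ q⟨m⟩*, the differentials of the (m+1)l polarizations {F_i^j} at ξ are linearly independent if and only if ξ_m ∈ Ω_{q*}; i.e., Ω_{q⟨m⟩*} = (⊕_{j=0}^{m-1} q_{[j]}*) × Ω_{q*}, which is big in q⟨m⟩*. -/
open Module MvPolynomial

variable (k : Type*) [Field k]

section Defs

variable {L ι : Type*} [LieRing L] [LieAlgebra k L] [Fintype ι]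

/-- The coadjoint stabiliser `q_ξ`. -/
noncomputable def coadStab (ξ : Module.Dual k L) : Submodule k L where
  carrier := {x : L | ∀ y : L, ξ ⁅x, y⁆ = 0}
  add_mem' := by intro a b ha hb y; simp [add_lie, ha y, hb y]
  zero_mem' := by intro y; simp
  smul_mem' := by intro c a ha y; simp [smul_lie, ha y]

/-- The index of `q`: minimal dimension of a coadjoint stabiliser. -/
noncomputable def lieIndex (k L : Type*) [Field k] [LieRing L] [LieAlgebra k L] : ℕ :=
  sInf {d : ℕ | ∃ ξ : Module.Dual k L, d = Module.finrank k (coadStab k ξ)}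

/-- `g ∈ k[q*]` is a symmetric invariant of `q`: in the coordinates given by the
basis `b`, `{g, x} = 0` for every `x ∈ q` (for connected `Q` this is
`Q`-invariance). -/
def IsLieInvariant (b : Basis ι k L) (g : MvPolynomial ι k) : Prop :=
  ∀ (j : ι) (c : ι → k),
    ∑ i, MvPolynomial.eval c (MvPolynomial.pderiv i g) *
      (∑ r, c r * b.repr ⁅b i, b j⁆ r) = 0

/-- The set `Ω_{q*}` of points where the differentials of `f 0, …, f (l-1)` are
linearly independent. -/
def omegaSet {l : ℕ} (f : Fin l → MvPolynomial ι k) : Set (ι → k) :=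
  {c | LinearIndependent k
    (fun t : Fin l => fun i : ι => MvPolynomial.eval c (MvPolynomial.pderiv i (f t)))}

/-- The Takiff bracket on `q⟨m⟩`. -/
def takiffBracket (m : ℕ) (x y : Fin (m + 1) → L) : Fin (m + 1) → L :=
  fun l => ∑ i : Fin (m + 1), ∑ j : Fin (m + 1),
    if (i : ℕ) + (j : ℕ) = (l : ℕ) then ⁅x i, y j⁆ else 0

/-- Pairing of a point of `q⟨m⟩*` (in coordinates) with an element of `q⟨m⟩`. -/
noncomputable def takiffPairing (b : Basis ι k L) (m : ℕ)
    (c : Fin (m + 1) × ι → k) (x : Fin (m + 1) → L) : k :=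
  ∑ p : Fin (m + 1) × ι, c p * b.repr (x p.1) p.2

/-- `F ∈ k[q⟨m⟩*]` is a symmetric invariant of the Takiff algebra `q⟨m⟩`. -/
noncomputable def IsTakiffInvariant (b : Basis ι k L) (m : ℕ)
    (F : MvPolynomial (Fin (m + 1) × ι) k) : Prop :=
  ∀ (p : Fin (m + 1) × ι) (c : Fin (m + 1) × ι → k),
    ∑ q : Fin (m + 1) × ι,
      MvPolynomial.eval c (MvPolynomial.pderiv q F) *
        takiffPairing k b m c
          (takiffBracket m (Pi.single q.1 (b q.2)) (Pi.single p.1 (b p.2))) = 0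

/-- The Raïs–Tauvel polarization `F^j` of `f`, as a polynomial on `q⟨m⟩*`. -/
noncomputable def polarizationPoly (m : ℕ) (f : MvPolynomial ι k) (j : ℕ) :
    MvPolynomial (Fin (m + 1) × ι) k :=
  Polynomial.coeff
    (MvPolynomial.aeval
      (fun i : ι => ∑ r : Fin (m + 1),
        Polynomial.C (MvPolynomial.X (r, i) : MvPolynomial (Fin (m + 1) × ι) k) *
          Polynomial.X ^ (m - (r : ℕ))) f) j

end Defs

/-!
Writing `ξ(t) = ∑_r ξ_r t^(m-r)`, the polarization `F^j` is the `t^j`-coefficient of `f(ξ(t))`,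
so by the chain rule `∂F^j/∂ξ_(r,i)` is the `t^j`-coefficient of `(∂_i f)(ξ(t)) t^(m-r)`. It
vanishes for `j < m - r` and equals `(∂_i f)(ξ(0)) = (∂_i f)(ξ_m)` for `j = m - r`: the Jacobian
of the `F_i^j` is block triangular, with the Jacobian of the `f_i` at `ξ_m` on the diagonal.

For bigness, freeze the coordinates `ξ_0, …, ξ_(m-1)` of a nonconstant `G`. If some such slice
of `G` is nonconstant in `ξ_m`, bigness of `Ω_(q*)` gives a zero of the slice in `Ω_(q*)`;
otherwise every slice is constant, and the slice through a zero of `G` (Nullstellensatz)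
vanishes identically.
-/

section Zeros

variable {k} {σ ι : Type*}

theorem MvPolynomial.exists_eval_eq_zero_of_totalDegree_pos [IsAlgClosed k] [Finite σ]
    {G : MvPolynomial σ k} (hG : 0 < G.totalDegree) : ∃ x, eval x G = 0 := by
  have hspan : Ideal.span {G} ≠ ⊤ := by
    rw [Ne, Ideal.span_singleton_eq_top, isUnit_iff_totalDegree_of_isReduced]
    exact fun h => hG.ne' h.2
  obtain ⟨J, hJ, hGJ⟩ := Ideal.exists_le_maximal _ hspan
  obtain ⟨x, rfl⟩ := eq_vanishingIdeal_singleton_of_isMaximal k hJ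
  refine ⟨x, ?_⟩
  rw [← aeval_eq_eval, ← mem_vanishingIdeal_singleton_iff]
  exact hGJ (Ideal.mem_span_singleton_self G)

theorem Function.extend_comp_self {α β γ : Sort*} (f : α → β) (g : β → γ) :
    Function.extend f (g ∘ f) g = g := by
  classical
  funext b
  by_cases hb : ∃ a, f a = b
  · rw [Function.extend_def, dif_pos hb, Function.comp_apply, Classical.choose_spec hb]
  · exact Function.extend_apply' _ _ _ hb

theorem eval_aeval_extend (e : ι → σ) (a : σ → k) (c : ι → k) (G : MvPolynomial σ k) :
    eval c (aeval (Function.extend e X (C ∘ a)) G) = eval (Function.extend e c a) G := by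
  rw [← aeval_eq_eval, comp_aeval_apply, aeval_eq_eval]
  congr 2
  funext s
  rw [Function.apply_extend (aeval c)]
  congr <;> funext <;> simp

theorem exists_eval_eq_zero_comp_mem [IsAlgClosed k] [Finite σ] [Nonempty ι] {e : ι → σ}
    (he : Function.Injective e) {Ω : Set (ι → k)}
    (hΩ : ∀ g : MvPolynomial ι k, 0 < g.totalDegree → ∃ c, eval c g = 0 ∧ c ∈ Ω)
    {G : MvPolynomial σ k} (hG : 0 < G.totalDegree) : ∃ x, eval x G = 0 ∧ x ∘ e ∈ Ω := by
  by_cases hslice : ∃ a : σ → k, 0 < (aeval (Function.extend e X (C ∘ a)) G).totalDegree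
  · obtain ⟨a, ha⟩ := hslice
    obtain ⟨c, hc, hcΩ⟩ := hΩ _ ha
    refine ⟨Function.extend e c a, ?_, ?_⟩
    · rwa [← eval_aeval_extend]
    · rwa [Function.extend_comp he]
  · push Not at hslice
    obtain ⟨z, hz⟩ := exists_eval_eq_zero_of_totalDegree_pos hG
    obtain ⟨c, -, hcΩ⟩ := hΩ (X (Classical.arbitrary ι)) (by simp)
    have hconst := totalDegree_eq_zero_iff_eq_C.mp (Nat.le_zero.mp (hslice z))
    have hz' : eval (z ∘ e) (aeval (Function.extend e X (C ∘ z)) G) = 0 := by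
      rwa [eval_aeval_extend, Function.extend_comp_self]
    refine ⟨Function.extend e c z, ?_, by rwa [Function.extend_comp he]⟩
    rw [← eval_aeval_extend, hconst, eval_C]
    rwa [hconst, eval_C] at hz'

end Zeros

section Polarization

variable {k} {ι τ : Type*}

noncomputable def evalPDerivCoeffs (c : τ → k) (q : τ) :
    Polynomial (MvPolynomial τ k) →ₗ[k] Polynomial k :=
  Polynomial.lsum fun n => Polynomial.monomial n ∘ₗ (aeval c).toLinearMap ∘ₗ (pderiv q).toLinearMap

@[simp]
theorem coeff_evalPDerivCoeffs (c : τ → k) (q : τ) (P : Polynomial (MvPolynomial τ k)) (j : ℕ) :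
    (evalPDerivCoeffs c q P).coeff j = eval c (pderiv q (P.coeff j)) := by
  classical
  rw [evalPDerivCoeffs, Polynomial.lsum_apply, Polynomial.sum_def, Polynomial.finsetSum_coeff]
  simp only [LinearMap.comp_apply, Polynomial.coeff_monomial, Finset.sum_ite_eq',
    Polynomial.mem_support_iff]
  split_ifs with h
  · rfl
  · simp [not_not.mp h]

theorem evalPDerivCoeffs_C_mul_X_pow (c : τ → k) (q : τ) (a : MvPolynomial τ k) (n : ℕ) :
    evalPDerivCoeffs c q (Polynomial.C a * Polynomial.X ^ n) =
      Polynomial.C (eval c (pderiv q a)) * Polynomial.X ^ n := by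
  ext j
  simp only [coeff_evalPDerivCoeffs, Polynomial.coeff_C_mul_X_pow]
  split_ifs <;> simp

theorem evalPDerivCoeffs_mul (c : τ → k) (q : τ) (P Q : Polynomial (MvPolynomial τ k)) :
    evalPDerivCoeffs c q (P * Q) =
      evalPDerivCoeffs c q P * Q.map (eval c) + P.map (eval c) * evalPDerivCoeffs c q Q := by
  ext j
  simp only [Polynomial.coeff_add, Polynomial.coeff_mul, coeff_evalPDerivCoeffs,
    Polynomial.coeff_map, map_sum, pderiv_mul, ← Finset.sum_add_distrib]
  refine Finset.sum_congr rfl fun x _ => ?_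
  simp only [map_add, map_mul]

variable {m : ℕ}

noncomputable def takiffCurve {R : Type*} [CommSemiring R] (x : Fin (m + 1) × ι → R) (i : ι) :
    Polynomial R :=
  ∑ r : Fin (m + 1), Polynomial.C (x (r, i)) * Polynomial.X ^ (m - (r : ℕ))

theorem map_eval_takiffCurve_X (c : Fin (m + 1) × ι → k) (i : ι) :
    (takiffCurve X i).map (eval c) = takiffCurve c i := by
  simp [takiffCurve, Polynomial.map_sum]

theorem map_eval_aeval_takiffCurve_X (c : Fin (m + 1) × ι → k) (f : MvPolynomial ι k) :
    (aeval (takiffCurve X) f).map (eval c) = aeval (takiffCurve c) f := by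
  have h := comp_aeval_apply (takiffCurve (m := m) X) (Polynomial.mapAlgHom (aeval c)) f
  simp only [Polynomial.coe_mapAlgHom] at h
  simpa [map_eval_takiffCurve_X] using h

theorem eval_zero_takiffCurve {R : Type*} [CommSemiring R] (x : Fin (m + 1) × ι → R) (i : ι) :
    (takiffCurve x i).eval 0 = x (Fin.last m, i) := by
  rw [takiffCurve, Polynomial.eval_finsetSum, Finset.sum_eq_single (Fin.last m)]
  · simp
  · intro r _ hr
    have : m - (r : ℕ) ≠ 0 := by have := Fin.val_lt_last hr; omega
    simp [this]
  · simp

theorem polarizationPoly_eq_coeff_aeval (f : MvPolynomial ι k) (j : ℕ) :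
    polarizationPoly k m f j = (aeval (takiffCurve (m := m) X) f).coeff j := rfl

theorem evalPDerivCoeffs_takiffCurve [DecidableEq ι] (c : Fin (m + 1) × ι → k) (r : Fin (m + 1))
    (i i' : ι) :
    evalPDerivCoeffs c (r, i) (takiffCurve X i') =
      if i' = i then Polynomial.X ^ (m - (r : ℕ)) else 0 := by
  simp only [takiffCurve, map_sum, evalPDerivCoeffs_C_mul_X_pow, pderiv_X, Pi.single_apply,
    Prod.mk.injEq]
  by_cases h : i' = i <;> simp [h]

theorem evalPDerivCoeffs_aeval_takiffCurve (c : Fin (m + 1) × ι → k) (r : Fin (m + 1)) (i : ι)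
    (f : MvPolynomial ι k) :
    evalPDerivCoeffs c (r, i) (aeval (takiffCurve X) f) =
      aeval (takiffCurve c) (pderiv i f) * Polynomial.X ^ (m - (r : ℕ)) := by
  classical
  induction f using MvPolynomial.induction_on with
  | C a => simpa using evalPDerivCoeffs_C_mul_X_pow c (r, i) (C a) 0
  | add f g hf hg => simp [hf, hg, add_mul]
  | mul_X f i' hf =>
    rw [map_mul, aeval_X, evalPDerivCoeffs_mul, hf, evalPDerivCoeffs_takiffCurve,
      map_eval_takiffCurve_X, map_eval_aeval_takiffCurve_X, pderiv_mul, pderiv_X]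
    by_cases h : i' = i
    · subst h
      simp only [↓reduceIte, Pi.single_eq_same, mul_one, map_add, map_mul, aeval_X]
      ring
    · simp only [h, ↓reduceIte, mul_zero, add_zero, ne_eq, not_false_eq_true,
        Pi.single_eq_of_ne, map_mul, aeval_X]
      ring

theorem eval_pderiv_polarizationPoly (c : Fin (m + 1) × ι → k) (r : Fin (m + 1)) (i : ι)
    (f : MvPolynomial ι k) (j : ℕ) :
    eval c (pderiv (r, i) (polarizationPoly k m f j)) =
      if m - (r : ℕ) ≤ j then (aeval (takiffCurve c) (pderiv i f)).coeff (j - (m - r)) else 0 := by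
  rw [polarizationPoly_eq_coeff_aeval, ← coeff_evalPDerivCoeffs,
    evalPDerivCoeffs_aeval_takiffCurve, Polynomial.coeff_mul_X_pow']

theorem coeff_zero_aeval_takiffCurve (c : Fin (m + 1) × ι → k) (g : MvPolynomial ι k) :
    (aeval (takiffCurve c) g).coeff 0 = eval (fun i => c (Fin.last m, i)) g := by
  rw [Polynomial.coeff_zero_eq_eval_zero, ← Polynomial.coe_aeval_eq_eval, comp_aeval_apply,
    ← aeval_eq_eval]
  simp only [Polynomial.coe_aeval_eq_eval, eval_zero_takiffCurve]

end Polarization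

section Triangular

variable {k} {κ ι : Type*} [Fintype κ] {m : ℕ}

theorem linearIndependent_iff_of_triangular {v : κ × Fin (m + 1) → Fin (m + 1) × ι → k}
    {w : κ → ι → k} (hzero : ∀ t (j r : Fin (m + 1)) i, (j : ℕ) + r < m → v (t, j) (r, i) = 0)
    (hdiag : ∀ t (j r : Fin (m + 1)) i, (j : ℕ) + r = m → v (t, j) (r, i) = w t i) :
    LinearIndependent k v ↔ LinearIndependent k w := by
  constructor
  · intro hv
    let S : (ι → k) →ₗ[k] Fin (m + 1) × ι → k :=
      LinearMap.pi fun p => if p.1 = Fin.last m then LinearMap.proj p.2 else 0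
    refine LinearIndependent.of_comp S ?_
    convert hv.comp (fun t => (t, 0)) fun _ _ h => congrArg Prod.fst h
    funext t ⟨r, i⟩
    by_cases hr : r = Fin.last m
    · subst hr
      simpa [S] using (hdiag t 0 _ i (by simp)).symm
    · simpa [S, hr] using (hzero t 0 r i (by simpa using Fin.val_lt_last hr)).symm
  · intro hw
    rw [Fintype.linearIndependent_iff] at hw ⊢
    intro g hg
    suffices ∀ j t, g (t, j) = 0 from fun p => this p.2 p.1
    intro j
    induction j using WellFoundedGT.induction with
    | _ j ih =>
    apply hw
    funext i
    have hcoord := congrFun hg (⟨m - j, by omega⟩, i)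
    rw [Fintype.sum_prod_type] at hcoord
    simp only [Finset.sum_apply, Pi.smul_apply, smul_eq_mul, Pi.zero_apply] at hcoord ⊢
    refine Eq.trans (Finset.sum_congr rfl fun t _ => ?_) hcoord
    rw [Finset.sum_eq_single j]
    · rw [hdiag t j _ i (by dsimp only; omega)]
    · intro j' _ hj'
      rcases lt_or_gt_of_ne hj' with hlt | hgt
      · rw [hzero t j' _ i (by rw [Fin.lt_def] at hlt; simp; omega), mul_zero]
      · rw [ih j' hgt t, zero_mul]
    · simp

end Triangular

theorem takiff_omega_eq_and_big (ι : Type*) [IsAlgClosed k] [Fintype ι]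
    (l : ℕ) (f : Fin l → MvPolynomial ι k)
    (hbig : ∀ g : MvPolynomial ι k, 0 < g.totalDegree →
      ∃ c, MvPolynomial.eval c g = 0 ∧ c ∈ omegaSet k f)
    (m : ℕ) :
    (∀ c : Fin (m + 1) × ι → k,
      LinearIndependent k
        (fun p : Fin l × Fin (m + 1) => fun q : Fin (m + 1) × ι =>
          MvPolynomial.eval c
            (MvPolynomial.pderiv q (polarizationPoly k m (f p.1) (p.2 : ℕ)))) ↔
        (fun i : ι => c (Fin.last m, i)) ∈ omegaSet k f) ∧
    (∀ G : MvPolynomial (Fin (m + 1) × ι) k, 0 < G.totalDegree →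
      ∃ c : Fin (m + 1) × ι → k, MvPolynomial.eval c G = 0 ∧
        (fun i : ι => c (Fin.last m, i)) ∈ omegaSet k f) := by
  refine ⟨fun c => linearIndependent_iff_of_triangular ?_ ?_, fun G hG => ?_⟩
  · intro t j r i h
    dsimp only
    rw [eval_pderiv_polarizationPoly, if_neg (by omega)]
  · intro t j r i h
    dsimp only
    rw [eval_pderiv_polarizationPoly, if_pos (by omega), show (j : ℕ) - (m - r) = 0 by omega,
      coeff_zero_aeval_takiffCurve]
  · rcases isEmpty_or_nonempty ι with hι | hι
    · rw [eq_C_of_isEmpty G, totalDegree_C] at hG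
      exact absurd hG (lt_irrefl 0)
    · exact exists_eval_eq_zero_comp_mem (e := fun i => (Fin.last m, i))
        (fun _ _ h => congrArg Prod.snd h) hbig hG
end
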